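/- Let A be an n×n real symmetric positive definite matrix, K ≥ 1, and let n = N_0 ≥ N_1 ≥ ⋯ ≥ N_K ≥ 1. For k = 1,…,K let Φ^{(k)} be an N_{k−1}×N_k real matrix with (Φ^{(k)})ᵀΦ^{(k)} = I_{N_k}; set 𝚽^{(k)} = Φ^{(1)}Φ^{(2)}⋯Φ^{(k)}, A^{(0)} = A, and A^{(k)} = ((𝚽^{(k)})ᵀA⁻¹𝚽^{(k)})⁻¹. Suppose there are ε_1,…,ε_K > 0 such that for every k and every y ∈ ℝ^{N_{k−1}}, ‖y − Φ^{(k)}(Φ^{(k)})ᵀy‖₂² ≤ ε_k² · yᵀA^{(k−1)}y. Then for all x ∈ ℝⁿ, ‖x − 𝚽^{(K)}(𝚽^{(K)})ᵀx‖₂ ≤ (Σ_{k=1}^K ε_k²)^{1/2} ‖x‖_A; moreover, with 𝚿^{(K)} = A⁻¹𝚽^{(K)}A^{(K)} and P^A the A-orthogonal projection onto the column span of 𝚿^{(K)}: for every x ∈ ℝⁿ with b = Ax, ‖x − P^A x‖_A ≤ (Σ_{k=1}^K ε_k²)^{1/2}‖b‖₂ and ‖x − P^A x‖₂ ≤ (Σ_{k=1}^K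 ε_k²)‖b‖₂, and ‖A⁻¹ − P^A A⁻¹‖₂ ≤ Σ_{k=1}^K ε_k². -/

import Mathlib

/-!
Write `𝚽_k` for `BΦ k` and `S = ∑ ε_k²`. Since `𝚽_{k+1} = 𝚽_k Φ_{k+1}` with both factors
isometries, the residual `x - 𝚽_{k+1}𝚽_{k+1}ᵀx` is the orthogonal sum of `x - 𝚽_k𝚽_kᵀx` and
`𝚽_k (y - Φ_{k+1}Φ_{k+1}ᵀy)` with `y = 𝚽_kᵀx`. The local hypothesis bounds the square of the second
piece by `ε_{k+1}² yᵀA^{(k)}y`, and `yᵀA^{(k)}y ≤ xᵀAx` by Cauchy–Schwarz in the `A`-inner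
product, since `w = A⁻¹𝚽_k A^{(k)} y` satisfies `xᵀAw = wᵀAw = yᵀA^{(k)}y`. Summing over the levels
gives the first bound.

The `A`-orthogonal projection is `P = A⁻¹𝚽_K A^{(K)} 𝚽_Kᵀ`, and `e = x - Px` satisfies
`𝚽_Kᵀe = 0`, so the first bound gives `‖e‖ ≤ √S ‖e‖_A`, while Galerkin orthogonality gives
`‖e‖_A² = eᵀb ≤ ‖e‖ ‖b‖`. Together they give `‖e‖_A ≤ √S ‖b‖` and `‖e‖ ≤ S ‖b‖`; the spectral
bound is the latter with `x = A⁻¹b`.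
-/

open Matrix BigOperators

noncomputable section

/-- Euclidean norm of a vector. -/
def norm2 {ι : Type} [Fintype ι] (x : ι → ℝ) : ℝ := Real.sqrt (x ⬝ᵥ x)

/-- `A`-energy norm of a vector: `‖x‖_A = √(xᵀ A x)`. -/
def normA {ι : Type} [Fintype ι] (A : Matrix ι ι ℝ) (x : ι → ℝ) : ℝ :=
  Real.sqrt (x ⬝ᵥ A.mulVec x)

/-- Spectral (ℓ²-operator) norm of a square real matrix. -/
def specNorm {ι : Type} [Fintype ι] [DecidableEq ι] (B : Matrix ι ι ℝ) : ℝ :=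
  ‖Matrix.toEuclideanCLM (𝕜 := ℝ) B‖

/-- Smallest value of the Rayleigh quotient; for a symmetric matrix this is the
smallest eigenvalue. -/
def lamMin {ι : Type} [Fintype ι] (B : Matrix ι ι ℝ) : ℝ :=
  sInf {r : ℝ | ∃ x : ι → ℝ, x ⬝ᵥ x = 1 ∧ r = x ⬝ᵥ B.mulVec x}

/-- Largest value of the Rayleigh quotient; for a symmetric matrix this is the
largest eigenvalue. -/
def lamMax {ι : Type} [Fintype ι] (B : Matrix ι ι ℝ) : ℝ :=
  sSup {r : ℝ | ∃ x : ι → ℝ, x ⬝ᵥ x = 1 ∧ r = x ⬝ᵥ B.mulVec x}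

section DotProduct

variable {ι κ : Type} [Fintype ι] [Fintype κ]

lemma dotProduct_self_nonneg (x : ι → ℝ) : 0 ≤ x ⬝ᵥ x :=
  Finset.sum_nonneg fun i _ => mul_self_nonneg (x i)

lemma norm2_nonneg (x : ι → ℝ) : 0 ≤ norm2 x := Real.sqrt_nonneg _

lemma norm2_sq (x : ι → ℝ) : norm2 x ^ 2 = x ⬝ᵥ x := Real.sq_sqrt (dotProduct_self_nonneg x)

lemma normA_sq {A : Matrix ι ι ℝ} (hA : A.PosSemidef) (x : ι → ℝ) :
    normA A x ^ 2 = x ⬝ᵥ A *ᵥ x := Real.sq_sqrt (by simpa using hA.dotProduct_mulVec_nonneg x)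

lemma norm2_eq_norm_toLp (x : ι → ℝ) : norm2 x = ‖WithLp.toLp 2 x‖ := by
  rw [EuclideanSpace.norm_eq, norm2]
  simp [dotProduct, sq]

lemma dotProduct_mulVec_eq_transpose_mulVec_dotProduct (Q : Matrix ι κ ℝ) (x : ι → ℝ)
    (v : κ → ℝ) : x ⬝ᵥ Q *ᵥ v = (Qᵀ *ᵥ x) ⬝ᵥ v := by
  rw [dotProduct_mulVec, mulVec_transpose]

lemma Matrix.PosSemidef.sq_dotProduct_mulVec_le {A : Matrix ι ι ℝ} (hA : A.PosSemidef)
    (x y : ι → ℝ) : (x ⬝ᵥ A *ᵥ y) ^ 2 ≤ (x ⬝ᵥ A *ᵥ x) * (y ⬝ᵥ A *ᵥ y) := by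
  classical
  have hsymm : y ⬝ᵥ A *ᵥ x = x ⬝ᵥ A *ᵥ y := by
    rw [dotProduct_mulVec_eq_transpose_mulVec_dotProduct, dotProduct_comm,
      ← conjTranspose_eq_transpose_of_trivial, hA.isHermitian.eq]
  have h := LinearMap.BilinForm.apply_mul_apply_le_of_forall_zero_le (toLinearMap₂' ℝ A)
    (fun z => by simpa [toLinearMap₂'_apply'] using hA.dotProduct_mulVec_nonneg z) x y
  simpa only [toLinearMap₂'_apply', hsymm, ← sq] using h

lemma dotProduct_le_norm2_mul_norm2 (x y : ι → ℝ) : x ⬝ᵥ y ≤ norm2 x * norm2 y := by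
  classical
  have h := PosSemidef.one.sq_dotProduct_mulVec_le x y
  simp only [one_mulVec] at h
  rw [norm2, norm2, ← Real.sqrt_mul (dotProduct_self_nonneg x)]
  exact (le_abs_self _).trans (Real.abs_le_sqrt h)

lemma specNorm_le_of_norm2_mulVec_le [DecidableEq ι] {B : Matrix ι ι ℝ} {C : ℝ} (hC : 0 ≤ C)
    (h : ∀ v, norm2 (B *ᵥ v) ≤ C * norm2 v) : specNorm B ≤ C :=
  ContinuousLinearMap.opNorm_le_bound _ hC fun v => by
    simpa only [norm2_eq_norm_toLp, WithLp.toLp_ofLp, ← toEuclideanCLM_toLp] using h v.ofLp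

end DotProduct

section Isometry

variable {ι κ : Type} [Fintype ι] [Fintype κ] [DecidableEq κ] {Q : Matrix ι κ ℝ}

lemma injective_mulVec_of_transpose_mul_self (hQ : Qᵀ * Q = 1) : Function.Injective Q.mulVec :=
  Function.LeftInverse.injective (g := Qᵀ.mulVec) fun v => by rw [mulVec_mulVec, hQ, one_mulVec]

lemma transpose_mul_self_mul {μ : Type} [DecidableEq μ] (hQ : Qᵀ * Q = 1) {R : Matrix κ μ ℝ}
    (hR : Rᵀ * R = 1) :
    (Q * R)ᵀ * (Q * R) = 1 := by
  rw [transpose_mul, Matrix.mul_assoc, ← Matrix.mul_assoc Qᵀ, hQ, Matrix.one_mul, hR]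

lemma transpose_mulVec_sub_mulVec_transpose_mulVec (hQ : Qᵀ * Q = 1) (x : ι → ℝ) :
    Qᵀ *ᵥ (x - Q *ᵥ (Qᵀ *ᵥ x)) = 0 := by
  rw [mulVec_sub, mulVec_mulVec, hQ, one_mulVec, sub_self]

lemma norm2_mulVec (hQ : Qᵀ * Q = 1) (v : κ → ℝ) : norm2 (Q *ᵥ v) = norm2 v := by
  rw [norm2, norm2, dotProduct_mulVec_eq_transpose_mulVec_dotProduct, mulVec_mulVec, hQ,
    one_mulVec]

lemma norm2_sq_sub_mul_mulVec {μ : Type} [Fintype μ] (hQ : Qᵀ * Q = 1) (R : Matrix κ μ ℝ)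
    (x : ι → ℝ) :
    norm2 (x - (Q * R) *ᵥ ((Q * R)ᵀ *ᵥ x)) ^ 2 =
      norm2 (x - Q *ᵥ (Qᵀ *ᵥ x)) ^ 2 +
        norm2 (Qᵀ *ᵥ x - R *ᵥ (Rᵀ *ᵥ (Qᵀ *ᵥ x))) ^ 2 := by
  set e := x - Q *ᵥ (Qᵀ *ᵥ x)
  set z := Qᵀ *ᵥ x - R *ᵥ (Rᵀ *ᵥ (Qᵀ *ᵥ x))
  have hsplit : x - (Q * R) *ᵥ ((Q * R)ᵀ *ᵥ x) = e + Q *ᵥ z := by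
    simp only [e, z, transpose_mul, ← mulVec_mulVec, mulVec_sub]
    abel
  have horth : e ⬝ᵥ Q *ᵥ z = 0 := by
    rw [dotProduct_mulVec_eq_transpose_mulVec_dotProduct,
      transpose_mulVec_sub_mulVec_transpose_mulVec hQ, zero_dotProduct]
  rw [hsplit, norm2_sq, norm2_sq, norm2_sq, ← norm2_sq z, ← norm2_mulVec hQ z, norm2_sq,
    add_dotProduct, dotProduct_add, dotProduct_add, dotProduct_comm (Q *ᵥ z) e, horth]
  ring

end Isometry

section EnergyProjection

variable {ι κ : Type} [Fintype ι] [Fintype κ] [DecidableEq ι] {A : Matrix ι ι ℝ}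
  {Q : Matrix ι κ ℝ}

lemma Matrix.PosDef.isUnit_det (hA : A.PosDef) : IsUnit A.det :=
  (isUnit_iff_isUnit_det A).mp hA.isUnit

lemma posDef_transpose_mul_inv_mul (hA : A.PosDef) (hQ : Function.Injective Q.mulVec) :
    (Qᵀ * A⁻¹ * Q).PosDef := by
  simpa only [conjTranspose_eq_transpose_of_trivial] using hA.inv.conjTranspose_mul_mul_same hQ

variable [DecidableEq κ]

/-- The paper's `A^{(k)}` when `Q = 𝚽^{(k)}`. -/
def coarseMatrix (A : Matrix ι ι ℝ) (Q : Matrix ι κ ℝ) : Matrix κ κ ℝ := (Qᵀ * A⁻¹ * Q)⁻¹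

/-- The `A`-orthogonal projection onto the column span of `A⁻¹ Q`. -/
def energyProjection (A : Matrix ι ι ℝ) (Q : Matrix ι κ ℝ) : Matrix ι ι ℝ :=
  A⁻¹ * Q * coarseMatrix A Q * Qᵀ

lemma mul_coarseMatrix (hA : A.PosDef) (hQ : Function.Injective Q.mulVec) :
    Qᵀ * A⁻¹ * Q * coarseMatrix A Q = 1 :=
  mul_nonsing_inv _ (posDef_transpose_mul_inv_mul hA hQ).isUnit_det

lemma transpose_coarseMatrix (hA : A.PosDef) : (coarseMatrix A Q)ᵀ = coarseMatrix A Q := by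
  have hAt : Aᵀ = A := by simpa only [conjTranspose_eq_transpose_of_trivial] using hA.isHermitian.eq
  rw [coarseMatrix, transpose_nonsing_inv, transpose_mul, transpose_mul, transpose_transpose,
    transpose_nonsing_inv, hAt, Matrix.mul_assoc]

lemma energy_coarseMatrix_le (hA : A.PosDef) (hQ : Function.Injective Q.mulVec) (x : ι → ℝ) :
    (Qᵀ *ᵥ x) ⬝ᵥ coarseMatrix A Q *ᵥ (Qᵀ *ᵥ x) ≤ x ⬝ᵥ A *ᵥ x := by
  set y := Qᵀ *ᵥ x
  set t := y ⬝ᵥ coarseMatrix A Q *ᵥ y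
  set w := A⁻¹ *ᵥ (Q *ᵥ (coarseMatrix A Q *ᵥ y))
  have hAw : A *ᵥ w = Q *ᵥ (coarseMatrix A Q *ᵥ y) := by
    rw [mulVec_mulVec, mul_nonsing_inv _ hA.isUnit_det, one_mulVec]
  have hQw : Qᵀ *ᵥ w = y := by
    simp only [w, mulVec_mulVec, ← Matrix.mul_assoc, mul_coarseMatrix hA hQ, one_mulVec]
  have hxw : x ⬝ᵥ A *ᵥ w = t := by
    rw [hAw, dotProduct_mulVec_eq_transpose_mulVec_dotProduct]
  have hww : w ⬝ᵥ A *ᵥ w = t := by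
    rw [hAw, dotProduct_mulVec_eq_transpose_mulVec_dotProduct, hQw]
  have hcs : t ^ 2 ≤ (x ⬝ᵥ A *ᵥ x) * t := by
    simpa only [hxw, hww] using hA.posSemidef.sq_dotProduct_mulVec_le x w
  have ht : 0 ≤ t := hww ▸ by simpa using hA.posSemidef.dotProduct_mulVec_nonneg w
  have hx : 0 ≤ x ⬝ᵥ A *ᵥ x := by simpa using hA.posSemidef.dotProduct_mulVec_nonneg x
  nlinarith

lemma mul_inv_mul_transpose_mul_eq_energyProjection {Ψ : Matrix ι κ ℝ} (hA : A.PosDef)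
    (hQ : Function.Injective Q.mulVec) (hΨ : Ψ = A⁻¹ * Q * coarseMatrix A Q) :
    Ψ * (Ψᵀ * A * Ψ)⁻¹ * (Ψᵀ * A) = energyProjection A Q := by
  have hAt : Aᵀ = A := by simpa only [conjTranspose_eq_transpose_of_trivial] using hA.isHermitian.eq
  have hH := mul_coarseMatrix hA hQ
  have hΨA : Ψᵀ * A = coarseMatrix A Q * Qᵀ := by
    rw [hΨ, transpose_mul, transpose_mul, transpose_coarseMatrix hA, transpose_nonsing_inv, hAt,
      Matrix.mul_assoc, Matrix.mul_assoc, nonsing_inv_mul _ hA.isUnit_det, Matrix.mul_one]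
  have hΨAΨ : Ψᵀ * A * Ψ = coarseMatrix A Q := by
    rw [hΨA, hΨ]
    calc coarseMatrix A Q * Qᵀ * (A⁻¹ * Q * coarseMatrix A Q)
        = coarseMatrix A Q * (Qᵀ * A⁻¹ * Q * coarseMatrix A Q) := by simp only [Matrix.mul_assoc]
      _ = coarseMatrix A Q := by rw [hH, Matrix.mul_one]
  rw [hΨAΨ, hΨA, hΨ, energyProjection]
  calc A⁻¹ * Q * coarseMatrix A Q * (coarseMatrix A Q)⁻¹ * (coarseMatrix A Q * Qᵀ)
      = A⁻¹ * Q * coarseMatrix A Q * ((coarseMatrix A Q)⁻¹ * coarseMatrix A Q) * Qᵀ := by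
        simp only [Matrix.mul_assoc]
    _ = A⁻¹ * Q * coarseMatrix A Q * Qᵀ := by
        rw [nonsing_inv_mul _ (isUnit_det_of_left_inverse hH), Matrix.mul_one]

lemma transpose_mulVec_sub_energyProjection (hA : A.PosDef) (hQ : Function.Injective Q.mulVec)
    (x : ι → ℝ) : Qᵀ *ᵥ (x - energyProjection A Q *ᵥ x) = 0 := by
  simp only [energyProjection, mulVec_sub, mulVec_mulVec, ← Matrix.mul_assoc,
    mul_coarseMatrix hA hQ, Matrix.one_mul, sub_self]

lemma energy_sub_energyProjection (hA : A.PosDef) (hQ : Function.Injective Q.mulVec)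
    (x : ι → ℝ) :
    (x - energyProjection A Q *ᵥ x) ⬝ᵥ A *ᵥ (x - energyProjection A Q *ᵥ x) =
      (x - energyProjection A Q *ᵥ x) ⬝ᵥ A *ᵥ x := by
  have hAP : A *ᵥ (energyProjection A Q *ᵥ x) = Q *ᵥ (coarseMatrix A Q *ᵥ (Qᵀ *ᵥ x)) := by
    simp only [energyProjection, mulVec_mulVec, ← Matrix.mul_assoc,
      mul_nonsing_inv _ hA.isUnit_det, Matrix.one_mul]
  rw [mulVec_sub A, dotProduct_sub, hAP,
    dotProduct_mulVec_eq_transpose_mulVec_dotProduct _ _ (_ *ᵥ _),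
    transpose_mulVec_sub_energyProjection hA hQ, zero_dotProduct, sub_zero]

end EnergyProjection

section Compression

variable {ι κ : Type} [Fintype ι] [Fintype κ] [DecidableEq ι] [DecidableEq κ]
  {A : Matrix ι ι ℝ} {Q : Matrix ι κ ℝ} {c : ℝ}

lemma norm2_sub_energyProjection_le_normA (hA : A.PosDef) (hQ : Function.Injective Q.mulVec)
    (hc : ∀ x, norm2 (x - Q *ᵥ (Qᵀ *ᵥ x)) ≤ c * normA A x) (x : ι → ℝ) :
    norm2 (x - energyProjection A Q *ᵥ x) ≤ c * normA A (x - energyProjection A Q *ᵥ x) := by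
  simpa only [transpose_mulVec_sub_energyProjection hA hQ x, mulVec_zero, sub_zero]
    using hc (x - energyProjection A Q *ᵥ x)

lemma normA_sub_energyProjection_le (hA : A.PosDef) (hQ : Function.Injective Q.mulVec)
    (hc0 : 0 ≤ c) (hc : ∀ x, norm2 (x - Q *ᵥ (Qᵀ *ᵥ x)) ≤ c * normA A x) (x : ι → ℝ) :
    normA A (x - energyProjection A Q *ᵥ x) ≤ c * norm2 (A *ᵥ x) := by
  set e := x - energyProjection A Q *ᵥ x
  have hsq : normA A e ^ 2 ≤ c * norm2 (A *ᵥ x) * normA A e :=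
    calc normA A e ^ 2 = e ⬝ᵥ A *ᵥ e := normA_sq hA.posSemidef e
      _ = e ⬝ᵥ A *ᵥ x := energy_sub_energyProjection hA hQ x
      _ ≤ norm2 e * norm2 (A *ᵥ x) := dotProduct_le_norm2_mul_norm2 _ _
      _ ≤ c * normA A e * norm2 (A *ᵥ x) :=
        mul_le_mul_of_nonneg_right (norm2_sub_energyProjection_le_normA hA hQ hc x)
          (norm2_nonneg _)
      _ = c * norm2 (A *ᵥ x) * normA A e := by ring
  nlinarith [Real.sqrt_nonneg (e ⬝ᵥ A *ᵥ e), mul_nonneg hc0 (norm2_nonneg (A *ᵥ x))]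

lemma norm2_sub_energyProjection_le (hA : A.PosDef) (hQ : Function.Injective Q.mulVec)
    (hc0 : 0 ≤ c) (hc : ∀ x, norm2 (x - Q *ᵥ (Qᵀ *ᵥ x)) ≤ c * normA A x) (x : ι → ℝ) :
    norm2 (x - energyProjection A Q *ᵥ x) ≤ c ^ 2 * norm2 (A *ᵥ x) :=
  calc norm2 (x - energyProjection A Q *ᵥ x)
      ≤ c * normA A (x - energyProjection A Q *ᵥ x) :=
        norm2_sub_energyProjection_le_normA hA hQ hc x
    _ ≤ c * (c * norm2 (A *ᵥ x)) :=
        mul_le_mul_of_nonneg_left (normA_sub_energyProjection_le hA hQ hc0 hc x) hc0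
    _ = c ^ 2 * norm2 (A *ᵥ x) := by ring

lemma specNorm_inv_sub_energyProjection_mul_inv_le (hA : A.PosDef)
    (hQ : Function.Injective Q.mulVec) (hc0 : 0 ≤ c)
    (hc : ∀ x, norm2 (x - Q *ᵥ (Qᵀ *ᵥ x)) ≤ c * normA A x) :
    specNorm (A⁻¹ - energyProjection A Q * A⁻¹) ≤ c ^ 2 :=
  specNorm_le_of_norm2_mulVec_le (sq_nonneg c) fun v => by
    have hv : A *ᵥ (A⁻¹ *ᵥ v) = v := by
      rw [mulVec_mulVec, mul_nonsing_inv _ hA.isUnit_det, one_mulVec]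
    simpa only [sub_mulVec, ← mulVec_mulVec, hv] using
      norm2_sub_energyProjection_le hA hQ hc0 hc (A⁻¹ *ᵥ v)

end Compression

section Multilevel

variable {ι : ℕ → Type} [∀ k, Fintype (ι k)] [∀ k, DecidableEq (ι k)]
  {A : Matrix (ι 0) (ι 0) ℝ} {Φ : (k : ℕ) → Matrix (ι k) (ι (k + 1)) ℝ}
  {BΦ : (k : ℕ) → Matrix (ι 0) (ι k) ℝ} {ε : ℕ → ℝ}

lemma transpose_mul_self_of_forall_lt {K : ℕ} (hΦ : ∀ k < K, (Φ k)ᵀ * Φ k = 1)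
    (hB0 : BΦ 0 = 1) (hBsucc : ∀ k, BΦ (k + 1) = BΦ k * Φ k) : (BΦ K)ᵀ * BΦ K = 1 := by
  induction K with
  | zero => rw [hB0, transpose_one, Matrix.one_mul]
  | succ K ih =>
    rw [hBsucc]
    exact transpose_mul_self_mul (ih fun k hk => hΦ k (by omega)) (hΦ K K.lt_succ_self)

lemma norm2_sq_sub_mulVec_le_sum {K : ℕ} (hA : A.PosDef) (hΦ : ∀ k < K, (Φ k)ᵀ * Φ k = 1)
    (hB0 : BΦ 0 = 1) (hBsucc : ∀ k, BΦ (k + 1) = BΦ k * Φ k)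
    (hlocal : ∀ k < K, ∀ y, norm2 (y - Φ k *ᵥ ((Φ k)ᵀ *ᵥ y)) ^ 2 ≤
      ε (k + 1) ^ 2 * (y ⬝ᵥ coarseMatrix A (BΦ k) *ᵥ y)) (x : ι 0 → ℝ) :
    norm2 (x - BΦ K *ᵥ ((BΦ K)ᵀ *ᵥ x)) ^ 2 ≤
      (∑ k ∈ Finset.range K, ε (k + 1) ^ 2) * (x ⬝ᵥ A *ᵥ x) := by
  induction K with
  | zero => simp [hB0, norm2]
  | succ K ih =>
    have hB := transpose_mul_self_of_forall_lt (K := K) (fun k hk => hΦ k (by omega)) hB0 hBsucc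
    rw [hBsucc, norm2_sq_sub_mul_mulVec hB, Finset.sum_range_succ, add_mul]
    gcongr ?_ + ?_
    · exact ih (fun k hk => hΦ k (by omega)) (fun k hk => hlocal k (by omega))
    · calc _ ≤ ε (K + 1) ^ 2 * ((BΦ K)ᵀ *ᵥ x ⬝ᵥ coarseMatrix A (BΦ K) *ᵥ ((BΦ K)ᵀ *ᵥ x)) :=
            hlocal K K.lt_succ_self _
        _ ≤ ε (K + 1) ^ 2 * (x ⬝ᵥ A *ᵥ x) := by
            gcongr
            exact energy_coarseMatrix_le hA (injective_mulVec_of_transpose_mul_self hB) x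

lemma norm2_sub_mulVec_le_sqrt_sum {K : ℕ} (hA : A.PosDef) (hΦ : ∀ k < K, (Φ k)ᵀ * Φ k = 1)
    (hB0 : BΦ 0 = 1) (hBsucc : ∀ k, BΦ (k + 1) = BΦ k * Φ k)
    (hlocal : ∀ k < K, ∀ y, norm2 (y - Φ k *ᵥ ((Φ k)ᵀ *ᵥ y)) ^ 2 ≤
      ε (k + 1) ^ 2 * (y ⬝ᵥ coarseMatrix A (BΦ k) *ᵥ y)) (x : ι 0 → ℝ) :
    norm2 (x - BΦ K *ᵥ ((BΦ K)ᵀ *ᵥ x)) ≤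
      √(∑ k ∈ Finset.range K, ε (k + 1) ^ 2) * normA A x :=
  calc norm2 (x - BΦ K *ᵥ ((BΦ K)ᵀ *ᵥ x))
      = √(norm2 (x - BΦ K *ᵥ ((BΦ K)ᵀ *ᵥ x)) ^ 2) := (Real.sqrt_sq (norm2_nonneg _)).symm
    _ ≤ √((∑ k ∈ Finset.range K, ε (k + 1) ^ 2) * (x ⬝ᵥ A *ᵥ x)) :=
        Real.sqrt_le_sqrt (norm2_sq_sub_mulVec_le_sum hA hΦ hB0 hBsucc hlocal x)
    _ = √(∑ k ∈ Finset.range K, ε (k + 1) ^ 2) * normA A x :=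
        Real.sqrt_mul (Finset.sum_nonneg fun _ _ => sq_nonneg _) _

end Multilevel

/-- Here `Φ k` is the paper's `Φ^{(k+1)}` and `BΦ k` is `𝚽^{(k)} = Φ^{(1)} ⋯ Φ^{(k)}`; the
`A`-orthogonal projection onto the column span of `𝚿^{(K)}` is written as `𝚿(𝚿ᵀA𝚿)⁻¹𝚿ᵀA`. -/
theorem multilevel_compression_error_general (K : ℕ) (N : ℕ → ℕ)
    (A : Matrix (Fin (N 0)) (Fin (N 0)) ℝ) (hA : A.PosDef)
    (Φ : (k : ℕ) → Matrix (Fin (N k)) (Fin (N (k + 1))) ℝ)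
    (hΦorth : ∀ k, k < K → (Φ k)ᵀ * Φ k = 1)
    (BΦ : (k : ℕ) → Matrix (Fin (N 0)) (Fin (N k)) ℝ)
    (hB0 : BΦ 0 = 1) (hBsucc : ∀ k, BΦ (k + 1) = BΦ k * Φ k)
    (ε : ℕ → ℝ)
    (hlocal : ∀ k, k < K → ∀ y : Fin (N k) → ℝ,
      norm2 (y - (Φ k).mulVec ((Φ k)ᵀ.mulVec y)) ^ 2 ≤
        ε (k + 1) ^ 2 * (y ⬝ᵥ (((BΦ k)ᵀ * A⁻¹ * BΦ k)⁻¹).mulVec y))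
    (Ψ : Matrix (Fin (N 0)) (Fin (N K)) ℝ)
    (hΨ : Ψ = A⁻¹ * BΦ K * ((BΦ K)ᵀ * A⁻¹ * BΦ K)⁻¹) :
    (∀ x : Fin (N 0) → ℝ,
      norm2 (x - (BΦ K).mulVec ((BΦ K)ᵀ.mulVec x)) ≤
        Real.sqrt (∑ k ∈ Finset.range K, ε (k + 1) ^ 2) * normA A x) ∧
    (∀ x : Fin (N 0) → ℝ,
      normA A (x - (Ψ * (Ψᵀ * A * Ψ)⁻¹ * (Ψᵀ * A)).mulVec x) ≤
        Real.sqrt (∑ k ∈ Finset.range K, ε (k + 1) ^ 2) * norm2 (A.mulVec x)) ∧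
    (∀ x : Fin (N 0) → ℝ,
      norm2 (x - (Ψ * (Ψᵀ * A * Ψ)⁻¹ * (Ψᵀ * A)).mulVec x) ≤
        (∑ k ∈ Finset.range K, ε (k + 1) ^ 2) * norm2 (A.mulVec x)) ∧
    specNorm (A⁻¹ - Ψ * (Ψᵀ * A * Ψ)⁻¹ * (Ψᵀ * A) * A⁻¹) ≤
      ∑ k ∈ Finset.range K, ε (k + 1) ^ 2 := by
  have hQ : Function.Injective (BΦ K).mulVec :=
    injective_mulVec_of_transpose_mul_self (transpose_mul_self_of_forall_lt hΦorth hB0 hBsucc)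
  have hS : 0 ≤ ∑ k ∈ Finset.range K, ε (k + 1) ^ 2 := Finset.sum_nonneg fun _ _ => sq_nonneg _
  have hcomp := norm2_sub_mulVec_le_sqrt_sum hA hΦorth hB0 hBsucc hlocal
  rw [mul_inv_mul_transpose_mul_eq_energyProjection hA hQ hΨ]
  refine ⟨hcomp, normA_sub_energyProjection_le hA hQ (Real.sqrt_nonneg _) hcomp, fun x => ?_, ?_⟩
  · simpa only [Real.sq_sqrt hS] using
      norm2_sub_energyProjection_le hA hQ (Real.sqrt_nonneg _) hcomp x
  · simpa only [Real.sq_sqrt hS] using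
      specNorm_inv_sub_energyProjection_mul_inv_le hA hQ (Real.sqrt_nonneg _) hcomp

/-- Multilevel compression error accumulation.  Here the `k`-th level
matrix `Φ^{(k+1)}` (with orthonormal columns) is `Φ k : Matrix (Fin (N k)) (Fin (N (k+1))) ℝ`
for `k < K`, `BΦ k` is the composite `𝚽^{(k)} = Φ^{(1)} ⋯ Φ^{(k)}`, and
`A^{(k)} = ((𝚽^{(k)})ᵀ A⁻¹ 𝚽^{(k)})⁻¹`.  Under the level-wise accuracy hypotheses with
constants `ε_1, …, ε_K`, the composite coarse space `𝚽^{(K)}` compresses `A` with total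
error `(∑ ε_k²)^{1/2}`, and the `A`-orthogonal projection onto the column span of
`𝚿^{(K)} = A⁻¹𝚽^{(K)}A^{(K)}` (given by the matrix `𝚿(𝚿ᵀA𝚿)⁻¹𝚿ᵀA`) satisfies the
stated bounds. -/
theorem multilevel_compression_error (K : ℕ) (hK : 1 ≤ K) (N : ℕ → ℕ)
    (hmono : ∀ k, k < K → N (k + 1) ≤ N k) (hNK : 1 ≤ N K)
    (A : Matrix (Fin (N 0)) (Fin (N 0)) ℝ) (hA : A.PosDef)
    (Φ : (k : ℕ) → Matrix (Fin (N k)) (Fin (N (k + 1))) ℝ)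
    (hΦorth : ∀ k, k < K → (Φ k)ᵀ * Φ k = 1)
    (BΦ : (k : ℕ) → Matrix (Fin (N 0)) (Fin (N k)) ℝ)
    (hB0 : BΦ 0 = 1) (hBsucc : ∀ k, BΦ (k + 1) = BΦ k * Φ k)
    (ε : ℕ → ℝ) (hε : ∀ k, k < K → 0 < ε (k + 1))
    (hlocal : ∀ k, k < K → ∀ y : Fin (N k) → ℝ,
      norm2 (y - (Φ k).mulVec ((Φ k)ᵀ.mulVec y)) ^ 2 ≤
        ε (k + 1) ^ 2 * (y ⬝ᵥ (((BΦ k)ᵀ * A⁻¹ * BΦ k)⁻¹).mulVec y))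
    (Ψ : Matrix (Fin (N 0)) (Fin (N K)) ℝ)
    (hΨ : Ψ = A⁻¹ * BΦ K * ((BΦ K)ᵀ * A⁻¹ * BΦ K)⁻¹) :
    (∀ x : Fin (N 0) → ℝ,
      norm2 (x - (BΦ K).mulVec ((BΦ K)ᵀ.mulVec x)) ≤
        Real.sqrt (∑ k ∈ Finset.range K, ε (k + 1) ^ 2) * normA A x) ∧
    (∀ x : Fin (N 0) → ℝ,
      normA A (x - (Ψ * (Ψᵀ * A * Ψ)⁻¹ * (Ψᵀ * A)).mulVec x) ≤
        Real.sqrt (∑ k ∈ Finset.range K, ε (k + 1) ^ 2) * norm2 (A.mulVec x)) ∧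
    (∀ x : Fin (N 0) → ℝ,
      norm2 (x - (Ψ * (Ψᵀ * A * Ψ)⁻¹ * (Ψᵀ * A)).mulVec x) ≤
        (∑ k ∈ Finset.range K, ε (k + 1) ^ 2) * norm2 (A.mulVec x)) ∧
    specNorm (A⁻¹ - Ψ * (Ψᵀ * A * Ψ)⁻¹ * (Ψᵀ * A) * A⁻¹) ≤
      ∑ k ∈ Finset.range K, ε (k + 1) ^ 2 :=
  multilevel_compression_error_general K N A hA Φ hΦorth BΦ hB0 hBsucc ε hlocal Ψ hΨ
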